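/- arXiv:1406.6706 — 5 statements merged into one kernel-verified Lean document; each statement's English description precedes it below -/
import Mathlib

section
/- For every wff A, the image E(A) is an evaluation-free wff, i.e., every occurrence of the evaluation constructor in E(A) lies within a quotation. -/
/-- The inductive type of type symbols of Q0-uqe: base types ι, o, ε and
the two binary type constructors (αβ) (functions from β to α) and ⟨αβ⟩ (ordered pairs). -/
inductive Typ : Type
  | iota : Typ
  | o : Typ
  | eps : Typ
  | fn : Typ → Typ → Typ
  | prod : Typ → Typ → Typ
  deriving DecidableEq

/-- The (intrinsically typed) wffs of Q0-uqe: variables, primitive constants,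
function application, function abstraction, conditionals, quotation and evaluation.
In `eval A n α`, `(n, α)` is the variable serving as the second argument of the
evaluation (it only fixes the type `α` of the evaluation). -/
inductive Wff : Typ → Type
  | var (n : ℕ) (α : Typ) : Wff α
  | con (n : ℕ) (α : Typ) : Wff α
  | app {α β : Typ} (A : Wff (Typ.fn α β)) (B : Wff β) : Wff α
  | abs {α : Typ} (n : ℕ) (β : Typ) (B : Wff α) : Wff (Typ.fn α β)
  | cond {α : Typ} (A : Wff Typ.o) (B C : Wff α) : Wff α
  | quot {α : Typ} (A : Wff α) : Wff Typ.eps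
  | eval (A : Wff Typ.eps) (n : ℕ) (α : Typ) : Wff α

def tyBin : Typ := Typ.fn (Typ.fn Typ.eps Typ.eps) Typ.eps
def tyTer : Typ := Typ.fn (Typ.fn (Typ.fn Typ.eps Typ.eps) Typ.eps) Typ.eps
def tyUn : Typ := Typ.fn Typ.eps Typ.eps

/-- The logical constants `app`, `abs`, `cond`, `quot`, `eval` (distinct primitive
constants used to build syntactic representations of wffs). -/
def cApp : Wff tyBin := Wff.con 0 tyBin
def cAbs : Wff tyBin := Wff.con 1 tyBin
def cCond : Wff tyTer := Wff.con 2 tyTer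
def cQuot : Wff tyUn := Wff.con 3 tyUn
def cEval : Wff tyBin := Wff.con 4 tyBin

/-- The syntactic representation function E from wffs to wffs of type ε. -/
def E : {α : Typ} → Wff α → Wff Typ.eps
  | _, Wff.var n α => Wff.quot (Wff.var n α)
  | _, Wff.con n α => Wff.quot (Wff.con n α)
  | _, Wff.app A B => Wff.app (Wff.app cApp (E A)) (E B)
  | _, Wff.abs n β B => Wff.app (Wff.app cAbs (Wff.quot (Wff.var n β))) (E B)
  | _, Wff.cond A B C => Wff.app (Wff.app (Wff.app cCond (E A)) (E B)) (E C)
  | _, Wff.quot A => Wff.app cQuot (E A)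
  | _, Wff.eval A n α => Wff.app (Wff.app cEval (E A)) (Wff.quot (Wff.var n α))

/-- A wff is evaluation-free if each occurrence of an evaluation in it is
within a quotation. -/
def evalFree : {α : Typ} → Wff α → Prop
  | _, Wff.var _ _ => True
  | _, Wff.con _ _ => True
  | _, Wff.app A B => evalFree A ∧ evalFree B
  | _, Wff.abs _ _ B => evalFree B
  | _, Wff.cond A B C => evalFree A ∧ evalFree B ∧ evalFree C
  | _, Wff.quot _ => True
  | _, Wff.eval _ _ _ => False

/-- The size of a wff: the number of variable and primitive-constant occurrences. -/
def sizeW : {α : Typ} → Wff α → ℕ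
  | _, Wff.var _ _ => 1
  | _, Wff.con _ _ => 1
  | _, Wff.app A B => sizeW A + sizeW B
  | _, Wff.abs _ _ B => 1 + sizeW B
  | _, Wff.cond A B C => sizeW A + sizeW B + sizeW C
  | _, Wff.quot A => sizeW A
  | _, Wff.eval A _ _ => sizeW A + 1

/-- The number of evaluations occurring in a wff that are not within a quotation. -/
def numEvals : {α : Typ} → Wff α → ℕ
  | _, Wff.var _ _ => 0
  | _, Wff.con _ _ => 0
  | _, Wff.app A B => numEvals A + numEvals B
  | _, Wff.abs _ _ B => numEvals B
  | _, Wff.cond A B C => numEvals A + numEvals B + numEvals C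
  | _, Wff.quot _ => 0
  | _, Wff.eval A _ _ => numEvals A + 1

/-- The complexity of a wff: the pair (number of evaluations not within a
quotation, size). -/
def complexity {α : Typ} (A : Wff α) : ℕ × ℕ := (numEvals A, sizeW A)

/-- The (syntactic) free-variable relation: `freeIn n α A` means the variable
`(n, α)` is free in `A` (variables within quotations, and the variable serving as
the second argument of an evaluation, are not free occurrences). -/
def freeIn (n : ℕ) (α : Typ) : {γ : Typ} → Wff γ → Prop
  | _, Wff.var m β => n = m ∧ α = β
  | _, Wff.con _ _ => False
  | _, Wff.app A B => freeIn n α A ∨ freeIn n α B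
  | _, Wff.abs m β B => ¬(n = m ∧ α = β) ∧ freeIn n α B
  | _, Wff.cond A B C => freeIn n α A ∨ freeIn n α B ∨ freeIn n α C
  | _, Wff.quot _ => False
  | _, Wff.eval A _ _ => freeIn n α A

/-- For every wff A, the image E(A) is evaluation-free. -/
theorem stmt3 {α : Typ} (A : Wff α) : evalFree (E A) := by
  induction A with
  | var | con => trivial
  | app _ _ ihA ihB => exact ⟨⟨trivial, ihA⟩, ihB⟩
  | abs _ _ _ ihB => exact ⟨⟨trivial, trivial⟩, ihB⟩
  | cond _ _ _ ihA ihB ihC => exact ⟨⟨⟨trivial, ihA⟩, ihB⟩, ihC⟩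
  | quot _ ihA => exact ⟨trivial, ihA⟩
  | eval _ _ _ ihA => exact ⟨⟨trivial, ihA⟩, trivial⟩
end

section
/- In a normal general model, if the value of app applied to constructions x and y is defined, then x and y are both standard constructions (i.e., of the form E(A) for some wff A) if and only if the resulting value app x y is a standard construction. -/
/-- An assignment into a frame `D`: it maps each variable `(n, α)` to an element
of the domain `D α`. -/
def Assign (D : Typ → Type) : Type := ∀ α : Typ, ℕ → D α

/-- Updating an assignment at the variable `(n, β)` with the value `d`. -/
def Assign.upd {D : Typ → Type} (φ : Assign D) (β : Typ) (n : ℕ) (d : D β) : Assign D :=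
  fun γ m =>
    if h : γ = β then (if m = n then cast (congrArg D h.symm) d else φ γ m) else φ γ m

/-- The type of the equality constants Q_{oαα}. -/
def tyQ (α : Typ) : Typ := Typ.fn (Typ.fn Typ.o α) α

/-- A (Henkin-style) general model for Q0-uqe: a frame of nonempty domains with
D_o = {T, F}, constructions E(A) among the elements of D_ε (via the injection
`embE`), partial-function application `appD`, an interpretation `J` of the
primitive constants (with Q interpreted as identity), and a possibly-partial
valuation function `V` satisfying the semantic conditions of a general model. -/
structure GeneralModel where
  D : Typ → Type
  inh : ∀ α : Typ, Nonempty (D α)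
  valT : D Typ.o
  valF : D Typ.o
  distinctTF : valT ≠ valF
  bool_only : ∀ x : D Typ.o, x = valT ∨ x = valF
  /-- the element of D_ε representing the construction E(A), for a wff A -/
  embE : (Σ α : Typ, Wff α) → D Typ.eps
  embE_inj : Function.Injective embE
  /-- application of the (partial or total) functions in the function domains -/
  appD : ∀ {α β : Typ}, D (Typ.fn α β) → D β → Option (D α)
  /-- functions of type (oβ) are total -/
  appD_o_total : ∀ {β : Typ} (f : D (Typ.fn Typ.o β)) (b : D β), (appD f b).isSome
  /-- interpretation of the primitive constants -/
  J : ∀ α : Typ, ℕ → D α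
  /-- the valuation function -/
  V : Assign D → {α : Typ} → Wff α → Option (D α)
  V_var : ∀ (φ : Assign D) (n : ℕ) (α : Typ), V φ (Wff.var n α) = some (φ α n)
  V_con : ∀ (φ : Assign D) (n : ℕ) (α : Typ), V φ (Wff.con n α) = some (J α n)
  V_o_total : ∀ (φ : Assign D) (A : Wff Typ.o), (V φ A).isSome
  V_app_some : ∀ (φ : Assign D) {α β : Typ} (A : Wff (Typ.fn α β)) (B : Wff β) f b v,
    V φ A = some f → V φ B = some b → appD f b = some v →
    V φ (Wff.app A B) = some v
  V_app_none_o : ∀ (φ : Assign D) {β : Typ} (A : Wff (Typ.fn Typ.o β)) (B : Wff β),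
    ((V φ A).bind fun f => (V φ B).bind fun b => appD f b) = none →
    V φ (Wff.app A B) = some valF
  V_app_none : ∀ (φ : Assign D) {α β : Typ} (A : Wff (Typ.fn α β)) (B : Wff β),
    α ≠ Typ.o →
    ((V φ A).bind fun f => (V φ B).bind fun b => appD f b) = none →
    V φ (Wff.app A B) = none
  V_abs : ∀ (φ : Assign D) {α : Typ} (n : ℕ) (β : Typ) (B : Wff α),
    ∃ f, V φ (Wff.abs n β B) = some f ∧
      ∀ d : D β, appD f d = V (Assign.upd φ β n d) B
  V_cond_T : ∀ (φ : Assign D) {α : Typ} (A : Wff Typ.o) (B C : Wff α),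
    V φ A = some valT → V φ (Wff.cond A B C) = V φ B
  V_cond_F : ∀ (φ : Assign D) {α : Typ} (A : Wff Typ.o) (B C : Wff α),
    V φ A = some valF → V φ (Wff.cond A B C) = V φ C
  V_quot : ∀ (φ : Assign D) {α : Typ} (A : Wff α),
    V φ (Wff.quot A) = some (embE ⟨α, A⟩)
  V_eval_some : ∀ (φ : Assign D) (A : Wff Typ.eps) (n : ℕ) {α : Typ} (B : Wff α),
    evalFree B → V φ A = some (embE ⟨α, B⟩) → (V φ B).isSome →
    V φ (Wff.eval A n α) = V φ B
  V_eval_none_o : ∀ (φ : Assign D) (A : Wff Typ.eps) (n : ℕ),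
    ¬ (∃ B : Wff Typ.o, evalFree B ∧ V φ A = some (embE ⟨Typ.o, B⟩) ∧ (V φ B).isSome) →
    V φ (Wff.eval A n Typ.o) = some valF
  V_eval_none : ∀ (φ : Assign D) (A : Wff Typ.eps) (n : ℕ) {α : Typ}, α ≠ Typ.o →
    ¬ (∃ B : Wff α, evalFree B ∧ V φ A = some (embE ⟨α, B⟩) ∧ (V φ B).isSome) →
    V φ (Wff.eval A n α) = none
  /-- Q_{oαα} is interpreted as the identity relation on D_α -/
  V_Q_refl : ∀ {α : Typ} (x : D α),
    ((appD (J (tyQ α) 8) x).bind fun g => appD g x) = some valT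
  V_Q_ne : ∀ {α : Typ} (x y : D α), x ≠ y →
    ((appD (J (tyQ α) 8) x).bind fun g => appD g y) = some valF

namespace GeneralModel

/-- The operation on constructions denoted by the logical constant app_εεε. -/
def opApp (M : GeneralModel) (x y : M.D Typ.eps) : Option (M.D Typ.eps) :=
  (M.appD (M.J tyBin 0) x).bind fun g => M.appD g y

/-- The operation on constructions denoted by the logical constant abs_εεε. -/
def opAbs (M : GeneralModel) (x y : M.D Typ.eps) : Option (M.D Typ.eps) :=
  (M.appD (M.J tyBin 1) x).bind fun g => M.appD g y

/-- The operation on constructions denoted by the logical constant cond_εεεε. -/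
def opCond (M : GeneralModel) (x y z : M.D Typ.eps) : Option (M.D Typ.eps) :=
  (M.appD (M.J tyTer 2) x).bind fun g => (M.appD g y).bind fun h => M.appD h z

/-- The operation on constructions denoted by the logical constant quot_εε. -/
def opQuot (M : GeneralModel) (x : M.D Typ.eps) : Option (M.D Typ.eps) :=
  M.appD (M.J tyUn 3) x

/-- The operation on constructions denoted by the logical constant eval_εεε. -/
def opEval (M : GeneralModel) (x y : M.D Typ.eps) : Option (M.D Typ.eps) :=
  (M.appD (M.J tyBin 4) x).bind fun g => M.appD g y

/-- The operation on constructions denoted by the logical constant sub_εεεε. -/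
def opSub (M : GeneralModel) (x y z : M.D Typ.eps) : Option (M.D Typ.eps) :=
  (M.appD (M.J tyTer 5) x).bind fun g => (M.appD g y).bind fun h => M.appD h z

def tyNfi : Typ := Typ.fn (Typ.fn Typ.o Typ.eps) Typ.eps

/-- The predicate on constructions denoted by the logical constant not-free-in_oεε. -/
def opNotFreeIn (M : GeneralModel) (x y : M.D Typ.eps) : Option (M.D Typ.o) :=
  (M.appD (M.J tyNfi 6) x).bind fun g => M.appD g y

/-- The operation on constructions denoted by the logical constant cleanse_εε. -/
def opCleanse (M : GeneralModel) (x : M.D Typ.eps) : Option (M.D Typ.eps) :=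
  M.appD (M.J tyUn 7) x

/-- The construction representing the variable (n, α). -/
def vE (M : GeneralModel) (n : ℕ) (α : Typ) : M.D Typ.eps :=
  M.embE ⟨α, Wff.var n α⟩

end GeneralModel
/-- A normal general model: a general model satisfying the specifying axioms
(Specifications 1–9) for the logical constants involving the type ε, here
stated on the standard constructions (the representations E(A) of wffs A). -/
structure NormalModel extends GeneralModel where
  /-- Spec 4/6: app on standard constructions builds the representation of an
  application, fails on type mismatch, and is injective with shape inversion. -/
  app_std : ∀ {α β : Typ} (A : Wff (Typ.fn α β)) (B : Wff β),
    toGeneralModel.opApp (embE ⟨Typ.fn α β, A⟩) (embE ⟨β, B⟩) =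
      some (embE ⟨α, Wff.app A B⟩)
  app_mismatch : ∀ {γ δ : Typ} (A : Wff γ) (B : Wff δ), (∀ α : Typ, γ ≠ Typ.fn α δ) →
    toGeneralModel.opApp (embE ⟨γ, A⟩) (embE ⟨δ, B⟩) = none
  app_inv : ∀ (x y : D Typ.eps) {γ : Typ} (C : Wff γ),
    toGeneralModel.opApp x y = some (embE ⟨γ, C⟩) →
    ∃ (β : Typ) (A : Wff (Typ.fn γ β)) (B : Wff β),
      C = Wff.app A B ∧ x = embE ⟨Typ.fn γ β, A⟩ ∧ y = embE ⟨β, B⟩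
  abs_std : ∀ {α : Typ} (n : ℕ) (β : Typ) (B : Wff α),
    toGeneralModel.opAbs (embE ⟨β, Wff.var n β⟩) (embE ⟨α, B⟩) =
      some (embE ⟨Typ.fn α β, Wff.abs n β B⟩)
  cond_std : ∀ {α : Typ} (A : Wff Typ.o) (B C : Wff α),
    toGeneralModel.opCond (embE ⟨Typ.o, A⟩) (embE ⟨α, B⟩) (embE ⟨α, C⟩) =
      some (embE ⟨α, Wff.cond A B C⟩)
  quot_std : ∀ {α : Typ} (A : Wff α),
    toGeneralModel.opQuot (embE ⟨α, A⟩) = some (embE ⟨Typ.eps, Wff.quot A⟩)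
  eval_std : ∀ (A : Wff Typ.eps) (n : ℕ) (α : Typ),
    toGeneralModel.opEval (embE ⟨Typ.eps, A⟩) (embE ⟨α, Wff.var n α⟩) =
      some (embE ⟨α, Wff.eval A n α⟩)
  /-- Spec 7: the not-free-in predicate. -/
  nfi_total : ∀ x y : D Typ.eps, (toGeneralModel.opNotFreeIn x y).isSome
  nfi_self : ∀ (n : ℕ) (α : Typ),
    toGeneralModel.opNotFreeIn (toGeneralModel.vE n α) (toGeneralModel.vE n α) = some valF
  nfi_var_ne : ∀ (n m : ℕ) (α β : Typ), (n, α) ≠ (m, β) →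
    toGeneralModel.opNotFreeIn (toGeneralModel.vE n α) (toGeneralModel.vE m β) = some valT
  nfi_con : ∀ (n : ℕ) (α : Typ) (m : ℕ) (β : Typ),
    toGeneralModel.opNotFreeIn (toGeneralModel.vE n α) (embE ⟨β, Wff.con m β⟩) = some valT
  nfi_app : ∀ (n : ℕ) (α : Typ) {γ δ : Typ} (A : Wff (Typ.fn γ δ)) (B : Wff δ),
    toGeneralModel.opNotFreeIn (toGeneralModel.vE n α) (embE ⟨γ, Wff.app A B⟩) = some valT ↔
      (toGeneralModel.opNotFreeIn (toGeneralModel.vE n α) (embE ⟨Typ.fn γ δ, A⟩) = some valT ∧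
       toGeneralModel.opNotFreeIn (toGeneralModel.vE n α) (embE ⟨δ, B⟩) = some valT)
  nfi_abs_same : ∀ (n : ℕ) (α : Typ) {γ : Typ} (B : Wff γ),
    toGeneralModel.opNotFreeIn (toGeneralModel.vE n α)
      (embE ⟨Typ.fn γ α, Wff.abs n α B⟩) = some valT
  nfi_abs_ne : ∀ (n m : ℕ) (α β : Typ) {γ : Typ} (B : Wff γ), (n, α) ≠ (m, β) →
    (toGeneralModel.opNotFreeIn (toGeneralModel.vE n α)
        (embE ⟨Typ.fn γ β, Wff.abs m β B⟩) = some valT ↔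
      toGeneralModel.opNotFreeIn (toGeneralModel.vE n α) (embE ⟨γ, B⟩) = some valT)
  nfi_cond : ∀ (n : ℕ) (α : Typ) {γ : Typ} (A : Wff Typ.o) (B C : Wff γ),
    toGeneralModel.opNotFreeIn (toGeneralModel.vE n α) (embE ⟨γ, Wff.cond A B C⟩) = some valT ↔
      (toGeneralModel.opNotFreeIn (toGeneralModel.vE n α) (embE ⟨Typ.o, A⟩) = some valT ∧
       toGeneralModel.opNotFreeIn (toGeneralModel.vE n α) (embE ⟨γ, B⟩) = some valT ∧
       toGeneralModel.opNotFreeIn (toGeneralModel.vE n α) (embE ⟨γ, C⟩) = some valT)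
  nfi_quot : ∀ (n : ℕ) (α : Typ) {γ : Typ} (A : Wff γ),
    toGeneralModel.opNotFreeIn (toGeneralModel.vE n α) (embE ⟨Typ.eps, Wff.quot A⟩) = some valT
  nfi_nonvar : ∀ (x y : D Typ.eps), (∀ (n : ℕ) (α : Typ), x ≠ toGeneralModel.vE n α) →
    toGeneralModel.opNotFreeIn x y = some valT
  /-- Spec 8: cleanse. -/
  cle_var : ∀ (n : ℕ) (α : Typ),
    toGeneralModel.opCleanse (toGeneralModel.vE n α) = some (toGeneralModel.vE n α)
  cle_con : ∀ (m : ℕ) (β : Typ),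
    toGeneralModel.opCleanse (embE ⟨β, Wff.con m β⟩) = some (embE ⟨β, Wff.con m β⟩)
  cle_app : ∀ {γ δ : Typ} (A : Wff (Typ.fn γ δ)) (B : Wff δ),
    toGeneralModel.opCleanse (embE ⟨γ, Wff.app A B⟩) =
      (toGeneralModel.opCleanse (embE ⟨Typ.fn γ δ, A⟩)).bind fun a =>
        (toGeneralModel.opCleanse (embE ⟨δ, B⟩)).bind fun b =>
          toGeneralModel.opApp a b
  cle_abs : ∀ {γ : Typ} (n : ℕ) (β : Typ) (B : Wff γ),
    toGeneralModel.opCleanse (embE ⟨Typ.fn γ β, Wff.abs n β B⟩) =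
      (toGeneralModel.opCleanse (embE ⟨γ, B⟩)).bind fun b =>
        toGeneralModel.opAbs (toGeneralModel.vE n β) b
  cle_cond : ∀ {γ : Typ} (A : Wff Typ.o) (B C : Wff γ),
    toGeneralModel.opCleanse (embE ⟨γ, Wff.cond A B C⟩) =
      (toGeneralModel.opCleanse (embE ⟨Typ.o, A⟩)).bind fun a =>
        (toGeneralModel.opCleanse (embE ⟨γ, B⟩)).bind fun b =>
          (toGeneralModel.opCleanse (embE ⟨γ, C⟩)).bind fun c =>
            toGeneralModel.opCond a b c
  cle_quot : ∀ {γ : Typ} (A : Wff γ),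
    toGeneralModel.opCleanse (embE ⟨Typ.eps, Wff.quot A⟩) = some (embE ⟨Typ.eps, Wff.quot A⟩)
  /-- Spec 9: sub. -/
  sub_var_same : ∀ {α : Typ} (A : Wff α) (n : ℕ),
    toGeneralModel.opSub (embE ⟨α, A⟩) (toGeneralModel.vE n α) (toGeneralModel.vE n α) =
      toGeneralModel.opCleanse (embE ⟨α, A⟩)
  sub_var_ne : ∀ {α : Typ} (A : Wff α) (n m : ℕ) (β : Typ), (n, α) ≠ (m, β) →
    toGeneralModel.opSub (embE ⟨α, A⟩) (toGeneralModel.vE n α) (toGeneralModel.vE m β) =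
      some (toGeneralModel.vE m β)
  sub_con : ∀ {α : Typ} (A : Wff α) (n m : ℕ) (β : Typ),
    toGeneralModel.opSub (embE ⟨α, A⟩) (toGeneralModel.vE n α) (embE ⟨β, Wff.con m β⟩) =
      some (embE ⟨β, Wff.con m β⟩)
  sub_app : ∀ {α : Typ} (A : Wff α) (n : ℕ) {γ δ : Typ} (B : Wff (Typ.fn γ δ)) (C : Wff δ),
    toGeneralModel.opSub (embE ⟨α, A⟩) (toGeneralModel.vE n α) (embE ⟨γ, Wff.app B C⟩) =
      (toGeneralModel.opSub (embE ⟨α, A⟩) (toGeneralModel.vE n α)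
          (embE ⟨Typ.fn γ δ, B⟩)).bind fun b =>
        (toGeneralModel.opSub (embE ⟨α, A⟩) (toGeneralModel.vE n α)
            (embE ⟨δ, C⟩)).bind fun c =>
          toGeneralModel.opApp b c
  sub_abs_same : ∀ {α γ : Typ} (A : Wff α) (n : ℕ) (B : Wff γ),
    toGeneralModel.opSub (embE ⟨α, A⟩) (toGeneralModel.vE n α)
        (embE ⟨Typ.fn γ α, Wff.abs n α B⟩) =
      (toGeneralModel.opCleanse (embE ⟨γ, B⟩)).bind fun b =>
        toGeneralModel.opAbs (toGeneralModel.vE n α) b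
  sub_abs_ne_ok : ∀ {α γ : Typ} (A : Wff α) (n m : ℕ) (β : Typ) (B : Wff γ),
    (n, α) ≠ (m, β) →
    (toGeneralModel.opNotFreeIn (toGeneralModel.vE n α) (embE ⟨γ, B⟩) = some valT ∨
     toGeneralModel.opNotFreeIn (toGeneralModel.vE m β) (embE ⟨α, A⟩) = some valT) →
    toGeneralModel.opSub (embE ⟨α, A⟩) (toGeneralModel.vE n α)
        (embE ⟨Typ.fn γ β, Wff.abs m β B⟩) =
      (toGeneralModel.opSub (embE ⟨α, A⟩) (toGeneralModel.vE n α) (embE ⟨γ, B⟩)).bind fun b =>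
        toGeneralModel.opAbs (toGeneralModel.vE m β) b
  sub_abs_ne_none : ∀ {α γ : Typ} (A : Wff α) (n m : ℕ) (β : Typ) (B : Wff γ),
    (n, α) ≠ (m, β) →
    toGeneralModel.opNotFreeIn (toGeneralModel.vE n α) (embE ⟨γ, B⟩) = some valF →
    toGeneralModel.opNotFreeIn (toGeneralModel.vE m β) (embE ⟨α, A⟩) = some valF →
    toGeneralModel.opSub (embE ⟨α, A⟩) (toGeneralModel.vE n α)
        (embE ⟨Typ.fn γ β, Wff.abs m β B⟩) = none
  sub_cond : ∀ {α : Typ} (A : Wff α) (n : ℕ) {γ : Typ} (B : Wff Typ.o) (C D' : Wff γ),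
    toGeneralModel.opSub (embE ⟨α, A⟩) (toGeneralModel.vE n α) (embE ⟨γ, Wff.cond B C D'⟩) =
      (toGeneralModel.opSub (embE ⟨α, A⟩) (toGeneralModel.vE n α)
          (embE ⟨Typ.o, B⟩)).bind fun b =>
        (toGeneralModel.opSub (embE ⟨α, A⟩) (toGeneralModel.vE n α)
            (embE ⟨γ, C⟩)).bind fun c =>
          (toGeneralModel.opSub (embE ⟨α, A⟩) (toGeneralModel.vE n α)
              (embE ⟨γ, D'⟩)).bind fun d =>
            toGeneralModel.opCond b c d
  sub_quot : ∀ {α γ : Typ} (A : Wff α) (n : ℕ) (C : Wff γ),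
    toGeneralModel.opSub (embE ⟨α, A⟩) (toGeneralModel.vE n α) (embE ⟨Typ.eps, Wff.quot C⟩) =
      some (embE ⟨Typ.eps, Wff.quot C⟩)

namespace NormalModel

variable (M : NormalModel)

theorem exists_embE_of_opApp_embE {A B : Σ α : Typ, Wff α} {z : M.D Typ.eps}
    (h : M.opApp (M.embE A) (M.embE B) = some z) : ∃ C : Σ α : Typ, Wff α, z = M.embE C := by
  obtain ⟨γ, A⟩ := A
  obtain ⟨δ, B⟩ := B
  by_cases hγ : ∃ α : Typ, γ = Typ.fn α δ
  · obtain ⟨α, rfl⟩ := hγ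
    rw [M.app_std A B, Option.some_inj] at h
    exact ⟨⟨α, Wff.app A B⟩, h.symm⟩
  · rw [M.app_mismatch A B fun α hα => hγ ⟨α, hα⟩] at h
    exact (Option.some_ne_none z h.symm).elim

theorem exists_embE_args_of_opApp_eq_embE {x y : M.D Typ.eps} {C : Σ α : Typ, Wff α}
    (h : M.opApp x y = some (M.embE C)) :
    (∃ A : Σ α : Typ, Wff α, x = M.embE A) ∧ (∃ B : Σ α : Typ, Wff α, y = M.embE B) := by
  obtain ⟨_, _, _, -, hx, hy⟩ := M.app_inv x y C.2 h
  exact ⟨⟨_, hx⟩, ⟨_, hy⟩⟩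

end NormalModel

/-- In a normal general model, if app applied to constructions
x and y is defined, then x and y are both standard constructions if and only
if the resulting value is a standard construction. -/
theorem stmt10 (M : NormalModel) (x y z : M.D Typ.eps)
    (h : M.toGeneralModel.opApp x y = some z) :
    ((∃ A : Σ α : Typ, Wff α, x = M.embE A) ∧ (∃ B : Σ α : Typ, Wff α, y = M.embE B)) ↔
      ∃ C : Σ α : Typ, Wff α, z = M.embE C := by
  constructor
  · rintro ⟨⟨A, rfl⟩, ⟨B, rfl⟩⟩
    exact M.exists_embE_of_opApp_embE h
  · rintro ⟨C, rfl⟩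
    exact M.exists_embE_args_of_opApp_eq_embE h
end

section
/- In every normal general model, for every evaluation-free wff A, the quotation map applied to A followed by the model's evaluation recovers A's value: V_φ(⟦[q A]⟧_α) ≃ V_φ(A) for all assignments φ (the law of disquotation for evaluation-free wffs). -/
namespace GeneralModel

variable (M : GeneralModel)

theorem eq_of_embE_eq {α : Typ} {A B : Wff α} (h : M.embE ⟨α, A⟩ = M.embE ⟨α, B⟩) :
    A = B :=
  eq_of_heq (Sigma.mk.inj_iff.mp (M.embE_inj h)).2

theorem V_eval_of_V_eq_embE {φ : Assign M.D} {A : Wff Typ.eps} (n : ℕ) {α : Typ} {B : Wff α}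
    (hB : evalFree B) (hA : M.V φ A = some (M.embE ⟨α, B⟩)) :
    M.V φ (Wff.eval A n α) = M.V φ B := by
  by_cases hdef : (M.V φ B).isSome
  · exact M.V_eval_some φ A n B hB hA hdef
  have hα : α ≠ Typ.o := by
    rintro rfl
    exact hdef (M.V_o_total φ B)
  have hno_candidate : ¬ ∃ C : Wff α, evalFree C ∧ M.V φ A = some (M.embE ⟨α, C⟩) ∧
      (M.V φ C).isSome := by
    rintro ⟨C, -, hC, hCdef⟩
    rw [hA] at hC
    obtain rfl := M.eq_of_embE_eq (Option.some.inj hC)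
    exact hdef hCdef
  rw [M.V_eval_none φ A n hα hno_candidate, Option.not_isSome_iff_eq_none.mp hdef]

end GeneralModel

/-- The law of disquotation for evaluation-free wffs: in every
normal general model, the evaluation of the quotation of an evaluation-free
wff A has the same value (or is likewise undefined) as A itself:
V_φ(⟦[q A]⟧_α) ≃ V_φ(A). -/
theorem stmt12 (M : GeneralModel) {α : Typ} (A : Wff α) (hA : evalFree A)
    (φ : Assign M.D) (n : ℕ) :
    M.V φ (Wff.eval (Wff.quot A) n α) = M.V φ A :=
  M.V_eval_of_V_eq_embE n hA (M.V_quot φ A)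
end

section
/- Alpha-conversion fails for non-evaluation-free wffs: there exist distinct variables x_ε and y_ε such that the wffs λx_ε ⟦x_ε⟧_⟨εε⟩ and λy_ε ⟦y_ε⟧_⟨εε⟩ are not logically equivalent, i.e., there is a normal general model M and assignment φ with V_φ(λx_ε ⟦x_ε⟧_⟨εε⟩) ≠ V_φ(λy_ε ⟦y_ε⟧_⟨εε⟩). -/
/-!
Take for `D_ε` the constructions themselves, with the logical constants acting on them
syntactically; this gives a normal model. Let the primitive constant `p` of type `⟨εε⟩ε` denote
`z ↦ (z, z)` and put `d = E(p x_ε)`. Applying `λx_ε ⟦x_ε⟧` to `d` evaluates `p x_ε` with `x_ε`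
bound to `d`, giving `(d, d)`; applying `λy_ε ⟦y_ε⟧` to `d` evaluates `p x_ε` under the unchanged
value of `x_ε`, giving `(φ x_ε, φ x_ε)`. The two functions differ as soon as `φ x_ε ≠ d`:
evaluation lets the binder capture a variable of the evaluated wff.
-/

theorem Assign.upd_same {D : Typ → Type} (φ : Assign D) (β : Typ) (n : ℕ) (d : D β) :
    φ.upd β n d β n = d := by
  simp [Assign.upd]

theorem Assign.upd_of_ne {D : Typ → Type} (φ : Assign D) (β : Typ) {n m : ℕ} (d : D β)
    {γ : Typ} (h : m ≠ n) : φ.upd β n d γ m = φ γ m := by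
  simp [Assign.upd, h]

open scoped Classical

namespace TermModel

abbrev Construction : Type := Σ α : Typ, Wff α

def appC : Construction → Construction → Option Construction
  | ⟨.fn α β, A⟩, ⟨δ, B⟩ => if h : δ = β then some ⟨α, .app A (h ▸ B)⟩ else none
  | _, _ => none

def absC : Construction → Construction → Option Construction
  | ⟨_, .var n β⟩, ⟨δ, B⟩ => some ⟨.fn δ β, .abs n β B⟩
  | _, _ => none

def condC : Construction → Construction → Construction → Option Construction
  | ⟨.o, A⟩, ⟨δ, B⟩, ⟨δ', C⟩ =>
      if h : δ' = δ then some ⟨δ, .cond A B (h ▸ C)⟩ else none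
  | _, _, _ => none

def evalC : Construction → Construction → Option Construction
  | ⟨.eps, A⟩, ⟨_, .var n δ⟩ => some ⟨δ, .eval A n δ⟩
  | _, _ => none

noncomputable def notFreeInC : Construction → Construction → Bool
  | ⟨_, .var n β⟩, ⟨_, B⟩ => decide ¬freeIn n β B
  | _, _ => true

def cleanseC : {γ : Typ} → Wff γ → Option Construction
  | _, .var m δ => some ⟨δ, .var m δ⟩
  | _, .con m δ => some ⟨δ, .con m δ⟩
  | _, .app A B => (cleanseC A).bind fun a => (cleanseC B).bind fun b => appC a b
  | _, .abs m δ B => (cleanseC B).bind fun b => absC ⟨δ, .var m δ⟩ b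
  | _, .cond A B C =>
      (cleanseC A).bind fun a => (cleanseC B).bind fun b => (cleanseC C).bind fun c => condC a b c
  | _, .quot C => some ⟨.eps, .quot C⟩
  | _, .eval _ _ _ => none

/-- Substitution of `x` for the variable `(n, β)`. -/
noncomputable def subC (x : Construction) (n : ℕ) (β : Typ) :
    {γ : Typ} → Wff γ → Option Construction
  | _, .var m δ => if (n, β) = (m, δ) then cleanseC x.2 else some ⟨δ, .var m δ⟩
  | _, .con m δ => some ⟨δ, .con m δ⟩
  | _, .app A B => (subC x n β A).bind fun a => (subC x n β B).bind fun b => appC a b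
  | _, .abs m δ B =>
      if (n, β) = (m, δ) then (cleanseC B).bind fun b => absC ⟨δ, .var m δ⟩ b
      else if ¬freeIn n β B ∨ notFreeInC ⟨δ, .var m δ⟩ x then
        (subC x n β B).bind fun b => absC ⟨δ, .var m δ⟩ b
      else none
  | _, .cond A B C =>
      (subC x n β A).bind fun a => (subC x n β B).bind fun b =>
        (subC x n β C).bind fun c => condC a b c
  | _, .quot C => some ⟨.eps, .quot C⟩
  | _, .eval _ _ _ => none

abbrev Dom : Typ → Type
  | .iota => Unit
  | .o => Bool
  | .eps => Construction
  | .fn α β => Dom β → Option (Dom α)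
  | .prod α β => Dom α × Dom β

def Dom.default : (α : Typ) → Dom α
  | .iota => ()
  | .o => false
  | .eps => ⟨.o, .con 0 .o⟩
  | .fn _ _ => fun _ => none
  | .prod α β => (Dom.default α, Dom.default β)

/-- Values of type `o` are always defined: an undefined one becomes `F`. -/
def orFalse : (α : Typ) → Option (Dom α) → Option (Dom α)
  | .o, r => some (r.getD false)
  | _, r => r

theorem orFalse_of_ne_o {α : Typ} (h : α ≠ .o) (r : Option (Dom α)) : orFalse α r = r := by
  cases α <;> first | rfl | exact absurd rfl h

theorem orFalse_of_isSome {α : Typ} {r : Option (Dom α)} (h : r.isSome) : orFalse α r = r := by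
  obtain ⟨b, rfl⟩ := Option.isSome_iff_exists.1 h
  cases α <;> rfl

noncomputable def J : (α : Typ) → ℕ → Dom α
  | .fn (.fn .eps .eps) .eps, 0 => fun x => some fun y => appC x y
  | .fn (.fn .eps .eps) .eps, 1 => fun x => some fun y => absC x y
  | .fn (.fn (.fn .eps .eps) .eps) .eps, 2 => fun x => some fun y => some fun z => condC x y z
  | .fn .eps .eps, 3 => fun x => some ⟨.eps, .quot x.2⟩
  | .fn (.fn .eps .eps) .eps, 4 => fun x => some fun y => evalC x y
  | .fn (.fn (.fn .eps .eps) .eps) .eps, 5 => fun x => some fun y => some fun z =>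
      match y with
      | ⟨_, .var n β⟩ => subC x n β z.2
      | _ => none
  | .fn (.fn .o .eps) .eps, 6 => fun x => some fun y => some (notFreeInC x y)
  | .fn .eps .eps, 7 => fun x => cleanseC x.2
  -- `Q`: the pattern cannot force its two argument types to agree, hence `HEq`
  | .fn (.fn .o _) _, 8 => fun x => some fun y => some (decide (HEq x y))
  | .fn (.prod .eps .eps) .eps, 100 => fun z => some (z, z)
  | α, _ => Dom.default α

section valWith

variable (ev ev' : Assign Dom → Option Construction → (α : Typ) → Option (Dom α))

/-- The valuations below differ only in the value `ev φ a α` of an evaluation of type `α` whose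
first argument has value `a`. -/
noncomputable def valWith : Assign Dom → {α : Typ} → Wff α → Option (Dom α)
  | φ, _, .var n α => some (φ α n)
  | _, _, .con n α => some (J α n)
  | φ, α, .app A B => orFalse α ((valWith φ A).bind fun f => (valWith φ B).bind f)
  | φ, _, .abs n β B => some fun d => valWith (φ.upd β n d) B
  | φ, _, .cond A B C => (valWith φ A).bind fun b => cond b (valWith φ B) (valWith φ C)
  | _, _, .quot A => some ⟨_, A⟩
  | φ, α, .eval A _ _ => ev φ (valWith φ A) α

theorem valWith_eq_of_evalFree {α : Typ} (A : Wff α) (hA : evalFree A) (φ : Assign Dom) :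
    valWith ev φ A = valWith ev' φ A := by
  induction A generalizing φ with
  | var | con | quot => rfl
  | app A B ihA ihB => simp only [valWith, ihA hA.1, ihB hA.2]
  | abs n β B ih => simp only [valWith, ih hA]
  | cond A B C ihA ihB ihC => simp only [valWith, ihA hA.1, ihB hA.2.1, ihC hA.2.2]
  | eval => exact hA.elim

theorem isSome_valWith_o (hev : ∀ φ a, (ev φ a .o).isSome) (φ : Assign Dom) :
    (A : Wff .o) → (valWith ev φ A).isSome
  | .var _ _ | .con _ _ | .app _ _ => rfl
  | .cond A B C => by
      obtain ⟨b, hb⟩ := Option.isSome_iff_exists.1 (isSome_valWith_o hev φ A)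
      cases b <;> simp [valWith, hb, isSome_valWith_o hev φ B, isSome_valWith_o hev φ C]
  | .eval _ _ _ => hev _ _

end valWith

/-- Evaluation refers to `valFree` rather than to `val` itself, since the wff it evaluates is
not a subterm; the two agree on evaluation-free wffs (`val_eq_valFree`). -/
noncomputable def valFree : Assign Dom → {α : Typ} → Wff α → Option (Dom α) :=
  valWith fun _ _ α => orFalse α none

noncomputable def evalVal (φ : Assign Dom) (a : Option Construction) (α : Typ) :
    Option (Dom α) :=
  if h : ∃ B : Wff α, evalFree B ∧ a = some ⟨α, B⟩ ∧ (valFree φ B).isSome then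
    valFree φ h.choose
  else orFalse α none

noncomputable def val : Assign Dom → {α : Typ} → Wff α → Option (Dom α) := valWith evalVal

section val

variable (φ : Assign Dom)

theorem val_app {α β : Typ} (A : Wff (.fn α β)) (B : Wff β) :
    val φ (.app A B) = orFalse α ((val φ A).bind fun f => (val φ B).bind f) := rfl

theorem val_cond {α : Typ} (A : Wff .o) (B C : Wff α) :
    val φ (.cond A B C) = (val φ A).bind fun b => cond b (val φ B) (val φ C) := rfl

theorem val_eq_valFree {α : Typ} {A : Wff α} (hA : evalFree A) : val φ A = valFree φ A :=
  valWith_eq_of_evalFree _ _ A hA φ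

theorem isSome_val_o (A : Wff .o) : (val φ A).isSome := by
  refine isSome_valWith_o _ (fun ψ a => ?_) φ A
  unfold evalVal
  split_ifs with h
  exacts [h.choose_spec.2.2, rfl]

theorem orFalse_val {α : Typ} (A : Wff α) : orFalse α (val φ A) = val φ A := by
  by_cases hα : α = .o
  · subst hα; exact orFalse_of_isSome (isSome_val_o φ A)
  · exact orFalse_of_ne_o hα _

theorem val_eval_of_evalFree (A : Wff .eps) (n : ℕ) {α : Typ} (B : Wff α) (hB : evalFree B)
    (hA : val φ A = some ⟨α, B⟩) (hVB : (val φ B).isSome) :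
    val φ (.eval A n α) = val φ B := by
  rw [val_eq_valFree φ hB] at hVB ⊢
  have h : ∃ B : Wff α, evalFree B ∧ val φ A = some ⟨α, B⟩ ∧ (valFree φ B).isSome :=
    ⟨B, hB, hA, hVB⟩
  have hchoose : h.choose = B := by simpa using h.choose_spec.2.1.symm.trans hA
  show evalVal φ (val φ A) α = _
  rw [evalVal, dif_pos h, hchoose]

theorem val_eval_of_not_exists (A : Wff .eps) (n : ℕ) {α : Typ}
    (h : ¬∃ B : Wff α, evalFree B ∧ val φ A = some ⟨α, B⟩ ∧ (val φ B).isSome) :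
    val φ (.eval A n α) = orFalse α none := by
  show evalVal φ (val φ A) α = _
  refine dif_neg fun ⟨B, hB, hA, hVB⟩ => h ⟨B, hB, hA, ?_⟩
  rwa [val_eq_valFree φ hB]

end val

theorem J_Q_apply {α : Typ} (x y : Dom α) :
    ((orFalse _ (J (tyQ α) 8 x)).bind fun g => orFalse .o (g y)) = some (decide (x = y)) := by
  simp [tyQ, J, orFalse]

@[reducible] noncomputable def generalModel : GeneralModel where
  D := Dom
  inh α := ⟨Dom.default α⟩
  valT := true
  valF := false
  distinctTF := Bool.noConfusion
  bool_only := Bool.eq_false_or_eq_true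
  embE := id
  embE_inj := Function.injective_id
  appD f b := orFalse _ (f b)
  appD_o_total _ _ := rfl
  J := J
  V := val
  V_var _ _ _ := rfl
  V_con _ _ _ := rfl
  V_o_total := isSome_val_o
  V_app_some φ α β A B f b v hA hB hv := by rwa [val_app, hA, hB]
  V_app_none_o φ β A B h := by
    rw [val_app]
    cases hA : val φ A <;> cases hB : val φ B <;> simp_all [orFalse]
  V_app_none φ α β A B hα h := by
    simp only [orFalse_of_ne_o hα] at h
    rw [val_app, h, orFalse_of_ne_o hα]
  V_abs φ α n β B := ⟨_, rfl, fun d => orFalse_val _ B⟩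
  V_cond_T φ α A B C h := by rw [val_cond, h]; rfl
  V_cond_F φ α A B C h := by rw [val_cond, h]; rfl
  V_quot _ _ _ := rfl
  V_eval_some := val_eval_of_evalFree
  V_eval_none_o φ A n h := val_eval_of_not_exists φ A n h
  V_eval_none φ A n α hα h := by rw [val_eval_of_not_exists φ A n h, orFalse_of_ne_o hα]
  V_Q_refl x := by simpa using J_Q_apply x x
  V_Q_ne x y hxy := by simpa [hxy] using J_Q_apply x y

theorem appC_mk {α β : Typ} (A : Wff (.fn α β)) (B : Wff β) :
    appC ⟨.fn α β, A⟩ ⟨β, B⟩ = some ⟨α, .app A B⟩ := dif_pos rfl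

theorem appC_eq_none {γ δ : Typ} (A : Wff γ) (B : Wff δ) (h : ∀ α, γ ≠ .fn α δ) :
    appC ⟨γ, A⟩ ⟨δ, B⟩ = none := by
  cases γ with
  | fn α β => exact dif_neg fun hδ => h α (by rw [hδ])
  | _ => rfl

theorem appC_eq_some {x y : Construction} {γ : Typ} {C : Wff γ}
    (h : appC x y = some ⟨γ, C⟩) :
    ∃ (β : Typ) (A : Wff (.fn γ β)) (B : Wff β),
      C = .app A B ∧ x = ⟨.fn γ β, A⟩ ∧ y = ⟨β, B⟩ := by
  obtain ⟨τ, A⟩ := x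
  obtain ⟨δ, B⟩ := y
  cases τ with
  | fn α β =>
    simp only [appC] at h
    split_ifs at h with hδ
    subst hδ
    obtain ⟨rfl, hC⟩ := Sigma.mk.inj (Option.some.inj h)
    exact ⟨δ, A, B, (eq_of_heq hC).symm, rfl, rfl⟩
  | _ => cases h

theorem condC_mk {α : Typ} (A : Wff .o) (B C : Wff α) :
    condC ⟨.o, A⟩ ⟨α, B⟩ ⟨α, C⟩ = some ⟨α, .cond A B C⟩ := dif_pos rfl

theorem notFreeInC_of_ne_var {x : Construction} (h : ∀ n α, x ≠ ⟨α, .var n α⟩)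
    (y : Construction) : notFreeInC x y = true := by
  obtain ⟨γ, A⟩ := x
  cases A with
  | var n _ => exact absurd rfl (h n γ)
  | _ => rfl

@[simp] theorem generalModel_embE (x : Construction) : generalModel.embE x = x := rfl

@[simp] theorem generalModel_vE (n : ℕ) (α : Typ) :
    generalModel.vE n α = ⟨α, .var n α⟩ := rfl

@[simp] theorem generalModel_opNotFreeIn (x y : Construction) :
    generalModel.opNotFreeIn x y = some (notFreeInC x y) := rfl

@[simp] theorem generalModel_opSub (x : Construction) (n : ℕ) (β : Typ) {γ : Typ} (C : Wff γ) :
    generalModel.opSub x ⟨β, .var n β⟩ ⟨γ, C⟩ = subC x n β C := rfl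

noncomputable def normalModel : NormalModel where
  toGeneralModel := generalModel
  app_std := appC_mk
  app_mismatch := appC_eq_none
  app_inv _ _ _ _ := appC_eq_some
  abs_std _ _ _ := rfl
  cond_std := condC_mk
  quot_std _ := rfl
  eval_std _ _ _ := rfl
  nfi_total _ _ := rfl
  nfi_self := by intros; simp [notFreeInC, freeIn]
  nfi_var_ne := by intros; simp_all [notFreeInC, freeIn]
  nfi_con := by intros; simp [notFreeInC, freeIn]
  nfi_app := by intros; simp [notFreeInC, freeIn]
  nfi_abs_same := by intros; simp [notFreeInC, freeIn]
  nfi_abs_ne := by intros; simp_all [notFreeInC, freeIn]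
  nfi_cond := by intros; simp [notFreeInC, freeIn]
  nfi_quot := by intros; simp [notFreeInC, freeIn]
  nfi_nonvar _ _ h := by simpa using notFreeInC_of_ne_var h _
  cle_var _ _ := rfl
  cle_con _ _ := rfl
  cle_app _ _ := rfl
  cle_abs _ _ _ := rfl
  cle_cond _ _ _ := rfl
  cle_quot _ := rfl
  sub_var_same _ _ := if_pos rfl
  sub_var_ne _ _ _ _ hne := if_neg hne
  sub_con _ _ _ _ := rfl
  sub_app := by intros; rfl
  sub_abs_same _ _ _ := if_pos rfl
  sub_abs_ne_ok A n m β B hne h := by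
    show subC _ n _ (.abs m β B) = (subC _ n _ B).bind fun b => absC ⟨β, .var m β⟩ b
    rw [subC, if_neg hne, if_pos (by simpa [notFreeInC] using h)]
  sub_abs_ne_none := by intros; simp_all [subC, notFreeInC]
  sub_cond _ _ _ _ _ _ := rfl
  sub_quot _ _ _ := rfl

/-- Interpreted by `J` as `z ↦ (z, z)`; its index only has to avoid those of the logical
constants. -/
def diag : Wff (.fn (.prod .eps .eps) .eps) := .con 100 _

theorem val_abs (φ : Assign Dom) {α : Typ} (n : ℕ) (β : Typ) (B : Wff α) :
    val φ (.abs n β B) = some fun d => val (φ.upd β n d) B := rfl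

theorem val_eval_var_of_diag (ψ : Assign Dom) {m : ℕ} (n k : ℕ)
    (hψ : ψ .eps m = ⟨_, .app diag (.var n .eps)⟩) :
    val ψ (.eval (.var m .eps) k (.prod .eps .eps)) = some (ψ .eps n, ψ .eps n) :=
  val_eval_of_evalFree ψ _ k (.app diag (.var n .eps)) ⟨trivial, trivial⟩
    (congrArg some hψ) rfl

theorem val_abs_eval_ne (φ : Assign Dom) {n m : ℕ} (hnm : n ≠ m) (k : ℕ)
    (hφ : φ .eps n ≠ ⟨_, .app diag (.var n .eps)⟩) :
    val φ (.abs n .eps (.eval (.var n .eps) k (.prod .eps .eps))) ≠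
      val φ (.abs m .eps (.eval (.var m .eps) k (.prod .eps .eps))) := by
  set d : Dom .eps := ⟨_, .app diag (.var n .eps)⟩
  intro h
  rw [val_abs, val_abs] at h
  have happ := congrFun (Option.some.inj h) d
  have hn : φ.upd .eps n d .eps n = d := Assign.upd_same φ .eps n d
  have hm : φ.upd .eps m d .eps n = φ .eps n := Assign.upd_of_ne φ .eps d hnm
  rw [val_eval_var_of_diag _ n k hn, val_eval_var_of_diag _ n k (Assign.upd_same φ .eps m d),
    hn, hm] at happ
  exact hφ (congrArg Prod.fst (Option.some.inj happ)).symm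

end TermModel

/-- Alpha-conversion fails for non-evaluation-free wffs: there
are a normal general model M, an assignment φ, and distinct variables x_ε, y_ε
such that λx_ε ⟦x_ε⟧_⟨εε⟩ and λy_ε ⟦y_ε⟧_⟨εε⟩ have different values. -/
theorem stmt13 :
    ∃ (M : NormalModel) (φ : Assign M.D) (n m k : ℕ), n ≠ m ∧
      M.V φ (Wff.abs n Typ.eps
          (Wff.eval (Wff.var n Typ.eps) k (Typ.prod Typ.eps Typ.eps))) ≠
      M.V φ (Wff.abs m Typ.eps
          (Wff.eval (Wff.var m Typ.eps) k (Typ.prod Typ.eps Typ.eps))) :=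
  ⟨TermModel.normalModel, fun α _ => TermModel.Dom.default α, 0, 1, 0, zero_ne_one,
    TermModel.val_abs_eval_ne _ zero_ne_one 0 (fun h => Typ.noConfusion (congrArg Sigma.fst h))⟩
end

section
/- In every normal general model M, if sub ⌜A_α⌝ ⌜x_α⌝ ⌜B_β⌝ is defined and not-free-in ⌜x_α⌝ ⌜B_β⌝ holds in M, then sub ⌜A_α⌝ ⌜x_α⌝ ⌜B_β⌝ = ⌜B_β⌝ holds in M, for evaluation-free A_α and B_β (substitution for a non-occurring variable is the identity). -/
/-!
Induction on `B`. The hypothesis that `x` is not free in `B` propagates to the immediate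
subwffs through the clauses of Specification 7, and it rules out both `B = x` and a
capturing abstraction, so each clause of Specification 9 rebuilds `⌜B⌝` from its parts.
The one place where `sub` does not recurse, an abstraction binding `x` itself, returns
`cleanse ⌜B⌝`, which is `⌜B⌝` because `B` is evaluation-free.
-/

namespace NormalModel

variable (M : NormalModel)

theorem cleanse_eq_self_of_evalFree {γ : Typ} (C : Wff γ) (hC : evalFree C) :
    M.opCleanse (M.embE ⟨γ, C⟩) = some (M.embE ⟨γ, C⟩) := by
  induction C with
  | var m δ => exact M.cle_var m δ
  | con m δ => exact M.cle_con m δ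
  | app A B ihA ihB =>
    rw [M.cle_app, ihA hC.1, ihB hC.2]
    exact M.app_std A B
  | abs m δ B ihB =>
    rw [M.cle_abs, ihB hC]
    exact M.abs_std m δ B
  | cond A B C ihA ihB ihC =>
    rw [M.cle_cond, ihA hC.1, ihB hC.2.1, ihC hC.2.2]
    exact M.cond_std A B C
  | quot A => exact M.cle_quot A
  | eval => exact hC.elim

theorem ne_of_notFreeIn_var {n m : ℕ} {α δ : Typ}
    (h : M.opNotFreeIn (M.vE n α) (M.vE m δ) = some M.valT) : (n, α) ≠ (m, δ) := by
  rintro ⟨⟩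
  rw [M.nfi_self] at h
  exact M.distinctTF (Option.some.inj h).symm

end NormalModel

theorem stmt17_general (M : NormalModel) {α β : Typ} (A : Wff α) (n : ℕ) (B : Wff β)
    (hB : evalFree B)
    (hnf : M.toGeneralModel.opNotFreeIn (M.toGeneralModel.vE n α) (M.embE ⟨β, B⟩) =
        some M.valT) :
    M.toGeneralModel.opSub (M.embE ⟨α, A⟩) (M.toGeneralModel.vE n α) (M.embE ⟨β, B⟩) =
      some (M.embE ⟨β, B⟩) := by
  induction B with
  | var m δ => exact M.sub_var_ne A n m δ (M.ne_of_notFreeIn_var hnf)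
  | con m δ => exact M.sub_con A n m δ
  | app B C ihB ihC =>
    obtain ⟨hnfB, hnfC⟩ := (M.nfi_app n α B C).mp hnf
    rw [M.sub_app, ihB hB.1 hnfB, Option.bind_some, ihC hB.2 hnfC, Option.bind_some]
    exact M.app_std B C
  | abs m δ B ihB =>
    by_cases hx : (n, α) = (m, δ)
    · obtain ⟨rfl, rfl⟩ := Prod.mk.inj hx
      rw [M.sub_abs_same, M.cleanse_eq_self_of_evalFree B hB, Option.bind_some]
      exact M.abs_std n α B
    · have hnfB := (M.nfi_abs_ne n m α δ B hx).mp hnf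
      rw [M.sub_abs_ne_ok A n m δ B hx (Or.inl hnfB), ihB hB hnfB, Option.bind_some]
      exact M.abs_std m δ B
  | cond B C D ihB ihC ihD =>
    obtain ⟨hnfB, hnfC, hnfD⟩ := (M.nfi_cond n α B C D).mp hnf
    rw [M.sub_cond, ihB hB.1 hnfB, Option.bind_some, ihC hB.2.1 hnfC, Option.bind_some,
      ihD hB.2.2 hnfD, Option.bind_some]
    exact M.cond_std B C D
  | quot C => exact M.sub_quot A n C
  | eval => exact hB.elim

/-- In every normal general model M, for evaluation-free A_α and
B_β, if sub ⌜A_α⌝ ⌜x_α⌝ ⌜B_β⌝ is defined and not-free-in ⌜x_α⌝ ⌜B_β⌝ holds in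
M, then sub ⌜A_α⌝ ⌜x_α⌝ ⌜B_β⌝ = ⌜B_β⌝ holds in M: substitution for a
non-occurring variable is the identity. -/
theorem stmt17 (M : NormalModel) {α β : Typ} (A : Wff α) (n : ℕ) (B : Wff β)
    (hA : evalFree A) (hB : evalFree B)
    (hdef : (M.toGeneralModel.opSub (M.embE ⟨α, A⟩) (M.toGeneralModel.vE n α)
        (M.embE ⟨β, B⟩)).isSome)
    (hnf : M.toGeneralModel.opNotFreeIn (M.toGeneralModel.vE n α) (M.embE ⟨β, B⟩) =
        some M.valT) :
    M.toGeneralModel.opSub (M.embE ⟨α, A⟩) (M.toGeneralModel.vE n α) (M.embE ⟨β, B⟩) =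
      some (M.embE ⟨β, B⟩) :=
  stmt17_general M A n B hB hnf
end
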